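/- arXiv:2402.13624 — 5 statements merged into one kernel-verified Lean document; each statement's English description precedes it below -/
import Mathlib

section
/- For every natural number n ≥ 3, the worst-case minimum spanner sizes for temporal cliques and temporal bi-cliques satisfy σ_cl(n) ≤ σ_bc(n) and σ_bc(n) ≤ 16·σ_cl(n); consequently σ_cl(n) ∈ Θ(σ_bc(n)). -/
/-!
Formalization framework for temporal graphs, temporal paths, spanners,
bi-spanners, and related notions from the paper on temporal spanners of
temporal cliques and bi-cliques.

A temporal graph on vertex type `V` is given by a labeling `lab : Sym2 V → L`
(only values on actual edges matter) together with an edge set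
`E : Set (Sym2 V)`.  A temporal path is a nonempty list of vertices whose
consecutive pairs are edges of the allowed edge set and whose labels are
non-decreasing along the path (non-strict temporal path).
-/

namespace TS

variable {V : Type} {L : Type} [LinearOrder L]

/-- The list of (undirected) edges traversed by a list of vertices. -/
def pathEdges (p : List V) : List (Sym2 V) :=
  (p.zip p.tail).map fun q => s(q.1, q.2)

/-- `p` is a temporal path using only edges from `S`, labelled by `lab`:
nonempty, all edges in `S`, labels non-decreasing along the path. -/
def IsTemporalPath (lab : Sym2 V → L) (S : Set (Sym2 V)) (p : List V) : Prop :=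
  p ≠ [] ∧ (∀ e ∈ pathEdges p, e ∈ S) ∧
    (pathEdges p).Chain' fun e f => lab e ≤ lab f

/-- `u` reaches `v` via a temporal path contained in `S`. -/
def Reaches (lab : Sym2 V → L) (S : Set (Sym2 V)) (u v : V) : Prop :=
  ∃ p : List V, p.head? = some u ∧ p.getLast? = some v ∧ IsTemporalPath lab S p

/-- Edge set of the complete graph on `V`. -/
def cliqueEdges (V : Type) : Set (Sym2 V) := {e | ¬ e.IsDiag}

/-- Edge set `A ⊗ B` of the complete bipartite graph with parts `α` and `β`. -/
def bicliqueEdges (α β : Type) : Set (Sym2 (α ⊕ β)) :=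
  {e | ∃ a b, e = s(Sum.inl a, Sum.inr b)}

/-- `S` is a spanner of the temporal graph with edge set `E`:
`S ⊆ E` and every vertex reaches every other vertex within `S`. -/
def IsSpanner (lab : Sym2 V → L) (E S : Set (Sym2 V)) : Prop :=
  S ⊆ E ∧ ∀ u v : V, Reaches lab S u v

/-- `S` is a bi-spanner of the temporal bi-clique with parts `α`, `β`:
`S ⊆ α ⊗ β` and every `a ∈ α` reaches every `b ∈ β` within `S`. -/
def IsBiSpanner {α β : Type} (lab : Sym2 (α ⊕ β) → L) (S : Set (Sym2 (α ⊕ β))) : Prop :=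
  S ⊆ bicliqueEdges α β ∧ ∀ (a : α) (b : β), Reaches lab S (Sum.inl a) (Sum.inr b)

/-- `σ_cl n`: the minimum number `m` such that every temporal clique on `n`
vertices admits a spanner with at most `m` edges. -/
noncomputable def sigmaCl (n : ℕ) : ℕ :=
  sInf {m | ∀ lab : Sym2 (Fin n) → ℕ, ∃ S : Finset (Sym2 (Fin n)),
    IsSpanner lab (cliqueEdges (Fin n)) (↑S) ∧ S.card ≤ m}

/-- `σ_bc n`: the minimum number `m` such that every temporal bi-clique with
`n` vertices on each side admits a bi-spanner with at most `m` edges. -/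
noncomputable def sigmaBc (n : ℕ) : ℕ :=
  sInf {m | ∀ lab : Sym2 (Fin n ⊕ Fin n) → ℕ, ∃ S : Finset (Sym2 (Fin n ⊕ Fin n)),
    IsBiSpanner lab (↑S) ∧ S.card ≤ m}

/-- `In(v,t)`: vertices reaching `v` via a temporal path (in edge set `E`)
all of whose labels are at most `t`. -/
def InSet (lab : Sym2 V → L) (E : Set (Sym2 V)) (v : V) (t : L) : Set V :=
  {u | ∃ p : List V, p.head? = some u ∧ p.getLast? = some v ∧
    IsTemporalPath lab E p ∧ ∀ e ∈ pathEdges p, lab e ≤ t}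

/-- `Out(v,t)`: vertices that `v` reaches via a temporal path (in edge set `E`)
all of whose labels are at least `t`. -/
def OutSet (lab : Sym2 V → L) (E : Set (Sym2 V)) (v : V) (t : L) : Set V :=
  {w | ∃ p : List V, p.head? = some v ∧ p.getLast? = some w ∧
    IsTemporalPath lab E p ∧ ∀ e ∈ pathEdges p, t ≤ lab e}

/-- `In(e)` for the edge `e = {u,v}`. -/
def InEdge (lab : Sym2 V → L) (E : Set (Sym2 V)) (u v : V) : Set V :=
  InSet lab E u (lab s(u, v)) ∪ InSet lab E v (lab s(u, v))

/-- `Out(e)` for the edge `e = {u,v}`. -/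
def OutEdge (lab : Sym2 V → L) (E : Set (Sym2 V)) (u v : V) : Set V :=
  OutSet lab E u (lab s(u, v)) ∪ OutSet lab E v (lab s(u, v))

variable {α β : Type}

/-- In a bi-clique, `b` is the earliest neighbor `π⁻(a)` of `a ∈ A`. -/
def IsEarliestNbrA (lab : Sym2 (α ⊕ β) → L) (a : α) (b : β) : Prop :=
  ∀ b' : β, lab s(Sum.inl a, Sum.inr b) ≤ lab s(Sum.inl a, Sum.inr b')

/-- In a bi-clique, `a` is the earliest neighbor `π⁻(b)` of `b ∈ B`. -/
def IsEarliestNbrB (lab : Sym2 (α ⊕ β) → L) (b : β) (a : α) : Prop :=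
  ∀ a' : α, lab s(Sum.inl a, Sum.inr b) ≤ lab s(Sum.inl a', Sum.inr b)

/-- In a bi-clique, `b` is the latest neighbor `π⁺(a)` of `a ∈ A`. -/
def IsLatestNbrA (lab : Sym2 (α ⊕ β) → L) (a : α) (b : β) : Prop :=
  ∀ b' : β, lab s(Sum.inl a, Sum.inr b') ≤ lab s(Sum.inl a, Sum.inr b)

/-- In a bi-clique, `a` is the latest neighbor `π⁺(b)` of `b ∈ B`. -/
def IsLatestNbrB (lab : Sym2 (α ⊕ β) → L) (b : β) (a : α) : Prop :=
  ∀ a' : α, lab s(Sum.inl a', Sum.inr b) ≤ lab s(Sum.inl a, Sum.inr b)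

/-- The bi-clique is extremally matched: both the set `M⁻` of earliest edges
and the set `M⁺` of latest edges form perfect matchings, i.e. the earliest-
(resp. latest-) neighbor maps of the two sides are mutually inverse. -/
def ExtremallyMatched (lab : Sym2 (α ⊕ β) → L) : Prop :=
  (∃ (f : α → β) (g : β → α),
    (∀ a, IsEarliestNbrA lab a (f a)) ∧ (∀ b, IsEarliestNbrB lab b (g b)) ∧
    (∀ a, g (f a) = a) ∧ (∀ b, f (g b) = b)) ∧
  (∃ (f : α → β) (g : β → α),
    (∀ a, IsLatestNbrA lab a (f a)) ∧ (∀ b, IsLatestNbrB lab b (g b)) ∧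
    (∀ a, g (f a) = a) ∧ (∀ b, f (g b) = b))

/-- `a ∈ A` is dismountable: there is `a' ≠ a` with
`λ({a, π⁻(a')}) ≤ λ({a', π⁻(a')})`. -/
def DismountableA (lab : Sym2 (α ⊕ β) → L) (a : α) : Prop :=
  ∃ (a' : α) (b : β), a' ≠ a ∧ IsEarliestNbrA lab a' b ∧
    lab s(Sum.inl a, Sum.inr b) ≤ lab s(Sum.inl a', Sum.inr b)

/-- `b ∈ B` is dismountable: there is `b' ≠ b` with
`λ({b', π⁺(b')}) ≤ λ({b, π⁺(b')})`. -/
def DismountableB (lab : Sym2 (α ⊕ β) → L) (b : β) : Prop :=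
  ∃ (b' : β) (a : α), b' ≠ b ∧ IsLatestNbrB lab b' a ∧
    lab s(Sum.inl a, Sum.inr b') ≤ lab s(Sum.inl a, Sum.inr b)

/-- The edge `{a', b'}` is `e`-reverted for `e = {a,b}`:
`λ({a', b}) ≤ λ({π⁺(b'), b})` or `λ({π⁻(a'), a}) ≤ λ({b', a})`. -/
def Reverted (lab : Sym2 (α ⊕ β) → L) (a : α) (b : β) (a' : α) (b' : β) : Prop :=
  (∃ a'' : α, IsLatestNbrB lab b' a'' ∧
    lab s(Sum.inl a', Sum.inr b) ≤ lab s(Sum.inl a'', Sum.inr b)) ∨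
  (∃ b'' : β, IsEarliestNbrA lab a' b'' ∧
    lab s(Sum.inl a, Sum.inr b'') ≤ lab s(Sum.inl a, Sum.inr b'))

/-- `M(e)`: the set of edges of the bi-clique that are *not* `e`-reverted,
for `e = {a,b}`. -/
def MSet (lab : Sym2 (α ⊕ β) → L) (a : α) (b : β) : Set (Sym2 (α ⊕ β)) :=
  {e | ∃ (a' : α) (b' : β), e = s(Sum.inl a', Sum.inr b') ∧ ¬ Reverted lab a b a' b'}

/-- `ind_{a}({a,b})`: the (1-based) rank of the edge `{a,b}` among the edges
incident to `a ∈ A`, ordered increasingly by label. -/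
def indA [Fintype β] (lab : Sym2 (α ⊕ β) → ℕ) (a : α) (b : β) : ℕ :=
  (Finset.univ.filter fun b' : β =>
    lab s(Sum.inl a, Sum.inr b') ≤ lab s(Sum.inl a, Sum.inr b)).card

/-- `ind_{b}({a,b})`: the (1-based) rank of the edge `{a,b}` among the edges
incident to `b ∈ B`, ordered increasingly by label. -/
def indB [Fintype α] (lab : Sym2 (α ⊕ β) → ℕ) (a : α) (b : β) : ℕ :=
  (Finset.univ.filter fun a' : α =>
    lab s(Sum.inl a', Sum.inr b) ≤ lab s(Sum.inl a, Sum.inr b)).card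

/-- Underlying symmetric label function of the shifted matching graph `SM_n`:
the edge `{a_i, b_j}` gets label `(j - i) mod n`. -/
def smFun (n : ℕ) : (Fin n ⊕ Fin n) → (Fin n ⊕ Fin n) → ℕ
  | Sum.inl i, Sum.inr j => (n + (j : ℕ) - (i : ℕ)) % n
  | Sum.inr j, Sum.inl i => (n + (j : ℕ) - (i : ℕ)) % n
  | _, _ => 0

theorem smFun_symm (n : ℕ) : ∀ x y, smFun n x y = smFun n y x := by
  rintro (i | i) (j | j) <;> rfl

/-- The labeling of the shifted matching graph `SM_n`. -/
def smLab (n : ℕ) : Sym2 (Fin n ⊕ Fin n) → ℕ :=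
  Sym2.lift ⟨smFun n, smFun_symm n⟩

end TS

/-!
`σ_cl(n) ≤ σ_bc(n)`: a clique labelling `λ` on `V` induces the bi-clique labelling
`{a_u, b_v} ↦ λ{u, v}` on two copies of `V`. Folding the two copies together maps a bi-spanner
onto a set of clique edges plus loops (the images of the edges `{a_u, b_u}`), and it maps temporal
paths to temporal walks; deleting the loops from a walk keeps it temporal.

`σ_bc(n) ≤ 16 σ_cl(n)`: given a bi-clique labelling on `A ⊔ B`, label the clique on `A ⊔ B`
by shifting the bi-clique labels up by one, giving the edges inside `B` the label `0` and those
inside `A` a label above all others. A temporal path from `A` to `B` in this clique can then use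
neither kind of inner edge, so it is a temporal path of the bi-clique. Nine `n`-vertex
sub-cliques of the `2n`-vertex clique, each made of `⌊n/2⌋` consecutive vertices of `A` and
`⌈n/2⌉` consecutive vertices of `B`, cover all pairs in `A × B`; the union of spanners of them
is a bi-spanner with at most `9 σ_cl(n)` edges.
-/
namespace TS

section Paths

variable {V W L : Type} [LinearOrder L]

@[simp] lemma pathEdges_cons_cons (x y : V) (l : List V) :
    pathEdges (x :: y :: l) = s(x, y) :: pathEdges (y :: l) := rfl

lemma pathEdges_map (f : V → W) : ∀ p : List V,
    pathEdges (p.map f) = (pathEdges p).map (Sym2.map f)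
  | [] | [_] => rfl
  | x :: y :: l => by
    rw [List.map_cons, List.map_cons, pathEdges_cons_cons, ← List.map_cons,
      pathEdges_map f (y :: l)]
    simp

lemma isChain_le_iff_pairwise (lab : Sym2 V → L) (l : List (Sym2 V)) :
    l.IsChain (fun e f => lab e ≤ lab f) ↔ l.Pairwise (fun e f => lab e ≤ lab f) :=
  have : IsTrans (Sym2 V) (fun e f => lab e ≤ lab f) := ⟨fun _ _ _ => le_trans⟩
  List.isChain_iff_pairwise

lemma exists_sublist_pathEdges_not_isDiag : ∀ p : List V, p ≠ [] →
    ∃ q : List V, q.head? = p.head? ∧ q.getLast? = p.getLast? ∧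
      (pathEdges q).Sublist (pathEdges p) ∧ ∀ e ∈ pathEdges q, ¬ e.IsDiag
  | [], h => absurd rfl h
  | [x], _ => ⟨[x], rfl, rfl, .slnil, by simp [pathEdges]⟩
  | x :: y :: l, _ => by
    obtain ⟨q, hhead, hlast, hsub, hdiag⟩ :=
      exists_sublist_pathEdges_not_isDiag (y :: l) (List.cons_ne_nil _ _)
    obtain ⟨q, rfl⟩ := List.head?_eq_some_iff.1 hhead
    by_cases hxy : x = y
    · subst hxy
      exact ⟨x :: q, hhead, by simpa [List.getLast?_cons_cons] using hlast, hsub.cons _, hdiag⟩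
    · refine ⟨x :: y :: q, rfl, by simpa [List.getLast?_cons_cons] using hlast,
        by simpa using hsub, ?_⟩
      simp only [pathEdges_cons_cons, List.mem_cons, forall_eq_or_imp, Sym2.mk_isDiag_iff]
      exact ⟨hxy, hdiag⟩

variable {lab : Sym2 V → L} {S S' : Set (Sym2 V)} {u v : V}

lemma reaches_self (lab : Sym2 V → L) (S : Set (Sym2 V)) (u : V) : Reaches lab S u u :=
  ⟨[u], rfl, rfl, by simp, by simp [pathEdges], List.isChain_nil⟩

lemma reaches_of_mem (h : s(u, v) ∈ S) : Reaches lab S u v :=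
  ⟨[u, v], rfl, rfl, by simp, by simpa [pathEdges] using h, List.isChain_singleton _⟩

lemma Reaches.mono (hS : S ⊆ S') (h : Reaches lab S u v) : Reaches lab S' u v :=
  let ⟨p, hu, hv, hp, hpS, hmono⟩ := h
  ⟨p, hu, hv, hp, fun e he => hS (hpS e he), hmono⟩

lemma Reaches.map (ψ : V → W) {lab : Sym2 W → L} (h : Reaches (lab ∘ Sym2.map ψ) S u v) :
    Reaches lab (Sym2.map ψ '' S) (ψ u) (ψ v) := by
  obtain ⟨p, hu, hv, hp, hpS, hmono⟩ := h
  refine ⟨p.map ψ, by simp [hu], by simp [hv], by simpa using hp, ?_, ?_⟩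
  · rw [pathEdges_map]
    intro _ hmem
    obtain ⟨e, he, rfl⟩ := List.mem_map.1 hmem
    exact Set.mem_image_of_mem _ (hpS e he)
  · rw [pathEdges_map]
    exact (List.isChain_map _).2 hmono

lemma Reaches.of_not_isDiag (h : Reaches lab S u v) : Reaches lab {e ∈ S | ¬ e.IsDiag} u v := by
  obtain ⟨p, hu, hv, hp, hpS, hmono⟩ := h
  obtain ⟨q, hqu, hqv, hsub, hdiag⟩ := exists_sublist_pathEdges_not_isDiag p hp
  refine ⟨q, hqu ▸ hu, hqv ▸ hv, fun hq => hp (by simpa [hq] using hqu.symm),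
    fun e he => ⟨hpS e (hsub.subset he), hdiag e he⟩, ?_⟩
  exact (isChain_le_iff_pairwise lab _).2 (((isChain_le_iff_pairwise lab _).1 hmono).sublist hsub)

lemma isSpanner_cliqueEdges (lab : Sym2 V → L) :
    IsSpanner lab (cliqueEdges V) (cliqueEdges V) := by
  refine ⟨subset_rfl, fun u v => ?_⟩
  by_cases huv : u = v
  · exact huv ▸ reaches_self lab _ u
  · exact reaches_of_mem (Sym2.mk_isDiag_iff.not.2 huv)

lemma isBiSpanner_bicliqueEdges {α β : Type} (lab : Sym2 (α ⊕ β) → L) :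
    IsBiSpanner lab (bicliqueEdges α β) :=
  ⟨subset_rfl, fun a b => reaches_of_mem ⟨a, b, rfl⟩⟩

end Paths

section Sigma

variable {n : ℕ}

lemma exists_card_le_sInf {ι α : Type*} [Fintype α] {P : ι → Finset α → Prop}
    (h : ∀ i, ∃ S, P i S) (i : ι) :
    ∃ S, P i S ∧ S.card ≤ sInf {m | ∀ i, ∃ S, P i S ∧ S.card ≤ m} :=
  Nat.sInf_mem (s := {m | ∀ i, ∃ S, P i S ∧ S.card ≤ m})
    ⟨Fintype.card α, fun i => (h i).imp fun S hS => ⟨hS, S.card_le_univ⟩⟩ i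

lemma exists_spanner_card_le_sigmaCl (lab : Sym2 (Fin n) → ℕ) :
    ∃ S : Finset (Sym2 (Fin n)),
      IsSpanner lab (cliqueEdges (Fin n)) (↑S) ∧ S.card ≤ sigmaCl n := by
  classical
  refine exists_card_le_sInf (P := fun lab S => IsSpanner lab (cliqueEdges (Fin n)) ↑S)
    (fun lab => ⟨Finset.univ.filter (· ∈ cliqueEdges (Fin n)), ?_⟩) lab
  simpa using isSpanner_cliqueEdges lab

lemma exists_biSpanner_card_le_sigmaBc (lab : Sym2 (Fin n ⊕ Fin n) → ℕ) :
    ∃ S : Finset (Sym2 (Fin n ⊕ Fin n)), IsBiSpanner lab (↑S) ∧ S.card ≤ sigmaBc n := by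
  classical
  refine exists_card_le_sInf (P := fun lab S => IsBiSpanner lab ↑S)
    (fun lab => ⟨Finset.univ.filter (· ∈ bicliqueEdges (Fin n) (Fin n)), ?_⟩) lab
  simpa using isBiSpanner_bicliqueEdges lab

theorem sigmaCl_le_sigmaBc : sigmaCl n ≤ sigmaBc n := by
  classical
  refine Nat.sInf_le fun lab => ?_
  let fold : Fin n ⊕ Fin n → Fin n := Sum.elim id id
  obtain ⟨S, ⟨-, hS⟩, hcard⟩ := exists_biSpanner_card_le_sigmaBc (lab ∘ Sym2.map fold)
  refine ⟨(S.image (Sym2.map fold)).filter (¬ ·.IsDiag),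
    ⟨fun e he => (Finset.mem_filter.1 he).2, fun u v => ?_⟩,
    (Finset.card_filter_le _ _).trans (Finset.card_image_le.trans hcard)⟩
  have := ((hS u v).map fold).of_not_isDiag
  simpa [fold, Finset.coe_filter, Finset.coe_image] using this

lemma exists_reaches_cover {W ι : Type} [DecidableEq W] (lab : Sym2 W → ℕ) (I : Finset ι)
    (ψ : ι → Fin n → W) :
    ∃ T : Finset (Sym2 W), T.card ≤ I.card * sigmaCl n ∧
      ∀ i ∈ I, ∀ k l, Reaches lab T (ψ i k) (ψ i l) := by
  choose S hS hcard using fun i => exists_spanner_card_le_sigmaCl (lab ∘ Sym2.map (ψ i))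
  refine ⟨I.biUnion fun i => (S i).image (Sym2.map (ψ i)),
    Finset.card_biUnion_le_card_mul _ _ _ fun i _ => Finset.card_image_le.trans (hcard i),
    fun i hi k l => (((hS i).2 k l).map (ψ i)).mono ?_⟩
  rintro _ ⟨e, he, rfl⟩
  exact Finset.mem_biUnion.2 ⟨i, hi, Finset.mem_image_of_mem _ he⟩

end Sigma

section CrossLabel

variable {α β : Type} [Fintype α] [Fintype β] (lab : Sym2 (α ⊕ β) → ℕ)

def crossFun : α ⊕ β → α ⊕ β → ℕ
  | .inl _, .inl _ => Finset.univ.sup lab + 2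
  | .inr _, .inr _ => 0
  | x, y => lab s(x, y) + 1

lemma crossFun_comm : ∀ x y, crossFun lab x y = crossFun lab y x := by
  rintro (a | b) (a' | b') <;> simp only [crossFun, Sym2.eq_swap]

def crossLab : Sym2 (α ⊕ β) → ℕ := Sym2.lift ⟨crossFun lab, crossFun_comm lab⟩

@[simp] lemma crossLab_inl_inl (a a' : α) :
    crossLab lab s(.inl a, .inl a') = Finset.univ.sup lab + 2 := rfl

@[simp] lemma crossLab_inr_inr (b b' : β) : crossLab lab s(.inr b, .inr b') = 0 := rfl

@[simp] lemma crossLab_inl_inr (a : α) (b : β) :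
    crossLab lab s(.inl a, .inr b) = lab s(.inl a, .inr b) + 1 := rfl

lemma crossLab_inl_pos (a : α) (y : α ⊕ β) : 0 < crossLab lab s(.inl a, y) := by
  cases y <;> simp

lemma crossLab_inl_inr_lt (a : α) (b : β) :
    crossLab lab s(.inl a, .inr b) < Finset.univ.sup lab + 2 := by
  have := Finset.le_sup (f := lab) (Finset.mem_univ s(.inl a, .inr b))
  simp only [crossLab_inl_inr]
  omega

lemma pathEdges_mem_bicliqueEdges {b : β} : ∀ p : List (α ⊕ β),
    (pathEdges p).Pairwise (fun e f => crossLab lab e ≤ crossLab lab f) →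
    (∀ e ∈ pathEdges p, 0 < crossLab lab e) → p.getLast? = some (.inr b) →
    ∀ e ∈ pathEdges p, e ∈ bicliqueEdges α β
  | [], _, _, _ | [_], _, _, _ => by simp [pathEdges]
  | x :: y :: l, hmono, hpos, hlast => by
    rw [pathEdges_cons_cons, List.pairwise_cons] at hmono
    simp only [pathEdges_cons_cons, List.mem_cons, forall_eq_or_imp] at hpos ⊢
    rw [List.getLast?_cons_cons] at hlast
    have htail := pathEdges_mem_bicliqueEdges (y :: l) hmono.2 hpos.2 hlast
    refine ⟨?_, htail⟩
    rcases x with a | b₁ <;> rcases y with a' | b₂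
    · -- an edge inside `A` carries the top label, so no cross edge can follow it
      exfalso
      cases l with
      | nil => simp at hlast
      | cons z l =>
        obtain ⟨a₀, b₀, he⟩ := htail s(.inl a', z) (by simp)
        have hle := hmono.1 s(.inl a', z) (by simp)
        rw [he, crossLab_inl_inl] at hle
        exact (crossLab_inl_inr_lt lab a₀ b₀).not_ge hle
    · exact ⟨a, b₂, rfl⟩
    · exact ⟨a', b₁, Sym2.eq_swap⟩
    · simp at hpos

lemma Reaches.of_crossLab {S : Set (Sym2 (α ⊕ β))} {a : α} {b : β}
    (h : Reaches (crossLab lab) S (.inl a) (.inr b)) :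
    Reaches lab {e ∈ S | e ∈ bicliqueEdges α β} (.inl a) (.inr b) := by
  obtain ⟨p, hu, hv, hp, hpS, hchain⟩ := h
  have hmono := (isChain_le_iff_pairwise _ _).1 hchain
  have hpos : ∀ e ∈ pathEdges p, 0 < crossLab lab e := by
    match p, hu, hmono with
    | [_], _, _ => simp [pathEdges]
    | .inl a :: y :: l, rfl, hmono =>
      rw [pathEdges_cons_cons, List.pairwise_cons] at hmono
      simp only [pathEdges_cons_cons, List.mem_cons, forall_eq_or_imp]
      exact ⟨crossLab_inl_pos lab a y,
        fun e he => (crossLab_inl_pos lab a y).trans_le (hmono.1 e he)⟩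
  have hcross := pathEdges_mem_bicliqueEdges lab p hmono hpos hv
  refine ⟨p, hu, hv, hp, fun e he => ⟨hpS e he, hcross e he⟩, ?_⟩
  refine (isChain_le_iff_pairwise _ _).2 (hmono.imp_of_mem fun he hf hle => ?_)
  obtain ⟨_, _, rfl⟩ := hcross _ he
  obtain ⟨_, _, rfl⟩ := hcross _ hf
  simpa using hle

end CrossLabel

section Windows

variable {n : ℕ}

/-- Not injective in general (indices wrap around mod `n`), which is harmless: only
reachability between its image points is used. -/
def window (ij : ℕ × ℕ) (k : Fin n) : Fin n ⊕ Fin n :=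
  if (k : ℕ) < n / 2 then .inl ⟨(ij.1 * (n / 2) + k) % n, Nat.mod_lt _ k.pos⟩
  else .inr ⟨(ij.2 * (n / 2) + (k - n / 2)) % n, Nat.mod_lt _ k.pos⟩

lemma exists_window_eq_inl_inr (hn : 2 ≤ n) (a b : Fin n) :
    ∃ ij ∈ Finset.range 3 ×ˢ Finset.range 3, ∃ k l,
      window ij k = .inl a ∧ window ij l = .inr b := by
  set h := n / 2 with hh
  have hpos : 0 < h := by omega
  have ha := a.isLt
  have hb := b.isLt
  have hamod := Nat.mod_lt a hpos
  have hbmod := Nat.mod_lt b hpos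
  refine ⟨(a / h, b / h), ?_, ⟨a % h, by omega⟩, ⟨h + b % h, by omega⟩, ?_, ?_⟩
  · simp only [Finset.mem_product, Finset.mem_range]
    constructor <;> exact Nat.div_lt_of_lt_mul (by omega)
  · simp [window, ← hh, hamod, Nat.div_add_mod', Nat.mod_eq_of_lt ha]
  · simp [window, ← hh, Nat.div_add_mod', Nat.mod_eq_of_lt hb]

theorem sigmaBc_le_nine_mul_sigmaCl (hn : 2 ≤ n) : sigmaBc n ≤ 9 * sigmaCl n := by
  classical
  refine Nat.sInf_le fun lab => ?_
  obtain ⟨T, hcard, hT⟩ :=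
    exists_reaches_cover (crossLab lab) (Finset.range 3 ×ˢ Finset.range 3) window
  refine ⟨T.filter (· ∈ bicliqueEdges (Fin n) (Fin n)),
    ⟨fun e he => (Finset.mem_filter.1 he).2, fun a b => ?_⟩,
    (Finset.card_filter_le _ _).trans (by simpa using hcard)⟩
  obtain ⟨ij, hij, k, l, hk, hl⟩ := exists_window_eq_inl_inr hn a b
  have := (hk ▸ hl ▸ hT ij hij k l).of_crossLab
  simpa [Finset.coe_filter] using this

end Windows

/-- For every `n ≥ 3`, `σ_cl(n) ≤ σ_bc(n)` and
`σ_bc(n) ≤ 16·σ_cl(n)`; consequently `σ_cl(n) ∈ Θ(σ_bc(n))`. -/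
theorem stmt0 (n : ℕ) (hn : 3 ≤ n) :
    sigmaCl n ≤ sigmaBc n ∧ sigmaBc n ≤ 16 * sigmaCl n :=
  ⟨sigmaCl_le_sigmaBc, (sigmaBc_le_nine_mul_sigmaCl (by omega)).trans (by omega)⟩

end TS
end

section
/- Let G = (V,E,λ) be a temporal graph. Then there exists an injective labeling function λ' : E → ℕ such that every spanner S ⊆ E of (V,E,λ') is also a spanner of G. Moreover, if G is a temporal bi-clique D = (A,B,λ), then every bi-spanner of (A,B,λ') is also a bi-spanner of D. -/
namespace TS

lemma reaches_mono {V : Type} {lab lab' : Sym2 V → ℕ} {S : Set (Sym2 V)}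
    (h : ∀ e f, lab' e ≤ lab' f → lab e ≤ lab f) {u v : V}
    (hr : Reaches lab' S u v) : Reaches lab S u v := by
  obtain ⟨p, h1, h2, hne, hS, hch⟩ := hr
  exact ⟨p, h1, h2, hne, hS, hch.imp fun {a b} hab => h a b hab⟩

lemma exists_good (V : Type) [Fintype V] (lab : Sym2 V → ℕ) :
    ∃ lab' : Sym2 V → ℕ, Function.Injective lab' ∧
      ∀ e f, lab' e ≤ lab' f → lab e ≤ lab f := by
  classical
  set n := Fintype.card (Sym2 V) with hn
  let enc : Sym2 V ≃ Fin n := Fintype.equivFin (Sym2 V)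
  have div_eq : ∀ e : Sym2 V, (lab e * (n + 1) + (enc e : ℕ)) / (n + 1) = lab e := by
    intro e
    rw [mul_comm, Nat.mul_add_div (Nat.succ_pos n),
      Nat.div_eq_of_lt ((enc e).isLt.trans (Nat.lt_succ_self n)), Nat.add_zero]
  refine ⟨fun e => lab e * (n + 1) + (enc e : ℕ), ?_, ?_⟩
  · intro e f hef
    dsimp only at hef
    have h1 : lab e = lab f := by rw [← div_eq e, ← div_eq f, hef]
    rw [h1] at hef
    exact enc.injective (Fin.ext (by omega))
  · intro e f hef
    dsimp only at hef
    by_contra h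
    push_neg at h
    have hf : (enc f : ℕ) < n + 1 := (enc f).isLt.trans (Nat.lt_succ_self n)
    have h2 : lab f * (n + 1) + (n + 1) ≤ lab e * (n + 1) :=
      by calc lab f * (n + 1) + (n + 1) = (lab f + 1) * (n + 1) := by ring
        _ ≤ lab e * (n + 1) := Nat.mul_le_mul_right _ h
    omega

/-- every temporal graph has an injective relabeling `λ'` such
that every spanner w.r.t. `λ'` is a spanner w.r.t. `λ`; moreover if the graph
is a bi-clique, the same `λ'` also preserves bi-spanners. -/
theorem stmt1 :
    (∀ (V : Type) [Fintype V] (E : Set (Sym2 V)) (lab : Sym2 V → ℕ),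
      ∃ lab' : Sym2 V → ℕ, Set.InjOn lab' E ∧
        ∀ S : Set (Sym2 V), S ⊆ E →
          IsSpanner lab' E S → IsSpanner lab E S) ∧
    (∀ (α β : Type) [Fintype α] [Fintype β] (lab : Sym2 (α ⊕ β) → ℕ),
      ∃ lab' : Sym2 (α ⊕ β) → ℕ, Set.InjOn lab' (bicliqueEdges α β) ∧
        ∀ S : Set (Sym2 (α ⊕ β)), S ⊆ bicliqueEdges α β →
          (IsSpanner lab' (bicliqueEdges α β) S → IsSpanner lab (bicliqueEdges α β) S) ∧
          (IsBiSpanner lab' S → IsBiSpanner lab S)) := by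
  constructor
  · intro V _ E lab
    obtain ⟨lab', hinj, hmono⟩ := exists_good V lab
    refine ⟨lab', hinj.injOn, fun S _hS hsp => ?_⟩
    exact ⟨hsp.1, fun u v => reaches_mono hmono (hsp.2 u v)⟩
  · intro α β _ _ lab
    obtain ⟨lab', hinj, hmono⟩ := exists_good (α ⊕ β) lab
    refine ⟨lab', hinj.injOn, fun S _hS => ⟨fun hsp => ?_, fun hsp => ?_⟩⟩
    · exact ⟨hsp.1, fun u v => reaches_mono hmono (hsp.2 u v)⟩
    · exact ⟨hsp.1, fun a b => reaches_mono hmono (hsp.2 a b)⟩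

end TS
end

section
/- Let D = (A,B,λ) be a temporal bi-clique with injective labeling λ and nonempty parts A and B. Then either D is extremally matched, or D contains a dismountable vertex. -/
namespace TS

/-- a temporal bi-clique with injective labeling and nonempty
parts is extremally matched or contains a dismountable vertex. -/
theorem stmt6 {α β : Type} [Fintype α] [Fintype β] [Nonempty α] [Nonempty β]
    (lab : Sym2 (α ⊕ β) → ℕ) (hinj : Set.InjOn lab (bicliqueEdges α β)) :
    ExtremallyMatched lab ∨
      (∃ a : α, DismountableA lab a) ∨ (∃ b : β, DismountableB lab b) := by
  classical
  have hfm : ∀ a : α, ∃ b : β, IsEarliestNbrA lab a b := fun a => by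
    obtain ⟨b, -, hb⟩ := Finset.exists_min_image Finset.univ
      (fun b : β => lab s(Sum.inl a, Sum.inr b)) Finset.univ_nonempty
    exact ⟨b, fun b' => hb b' (Finset.mem_univ _)⟩
  have hgm : ∀ b : β, ∃ a : α, IsEarliestNbrB lab b a := fun b => by
    obtain ⟨a, -, ha⟩ := Finset.exists_min_image Finset.univ
      (fun a : α => lab s(Sum.inl a, Sum.inr b)) Finset.univ_nonempty
    exact ⟨a, fun a' => ha a' (Finset.mem_univ _)⟩
  have hfp : ∀ a : α, ∃ b : β, IsLatestNbrA lab a b := fun a => by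
    obtain ⟨b, -, hb⟩ := Finset.exists_max_image Finset.univ
      (fun b : β => lab s(Sum.inl a, Sum.inr b)) Finset.univ_nonempty
    exact ⟨b, fun b' => hb b' (Finset.mem_univ _)⟩
  have hgp : ∀ b : β, ∃ a : α, IsLatestNbrB lab b a := fun b => by
    obtain ⟨a, -, ha⟩ := Finset.exists_max_image Finset.univ
      (fun a : α => lab s(Sum.inl a, Sum.inr b)) Finset.univ_nonempty
    exact ⟨a, fun a' => ha a' (Finset.mem_univ _)⟩
  choose fm hfm using hfm
  choose gm hgm using hgm
  choose fp hfp using hfp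
  choose gp hgp using hgp
  by_cases h1 : ∀ a : α, gm (fm a) = a
  · by_cases h2 : ∀ b : β, fp (gp b) = b
    · -- extremally matched
      left
      have hfminj : Function.Injective fm := Function.LeftInverse.injective h1
      have hgpinj : Function.Injective gp := Function.LeftInverse.injective h2
      have hcard : Fintype.card α = Fintype.card β :=
        le_antisymm (Fintype.card_le_of_injective _ hfminj)
          (Fintype.card_le_of_injective _ hgpinj)
      have hfmsurj : Function.Surjective fm :=
        ((Fintype.bijective_iff_injective_and_card fm).2 ⟨hfminj, hcard⟩).2
      have hgpsurj : Function.Surjective gp :=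
        ((Fintype.bijective_iff_injective_and_card gp).2 ⟨hgpinj, hcard.symm⟩).2
      constructor
      · refine ⟨fm, gm, hfm, hgm, h1, fun b => ?_⟩
        obtain ⟨a, rfl⟩ := hfmsurj b
        rw [h1]
      · refine ⟨fp, gp, hfp, hgp, fun a => ?_, h2⟩
        obtain ⟨b, rfl⟩ := hgpsurj a
        rw [h2]
    · -- dismountable B vertex
      right; right
      push_neg at h2
      obtain ⟨b, hb⟩ := h2
      exact ⟨fp (gp b), b, gp b, fun h => hb h.symm, hgp b, hfp (gp b) b⟩
  · -- dismountable A vertex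
    right; left
    push_neg at h1
    obtain ⟨a, ha⟩ := h1
    exact ⟨gm (fm a), a, fm a, fun h => ha h.symm, hfm a, hgm (fm a) a⟩

end TS
end

section
/- Let D = (A,B,λ) be an extremally matched temporal bi-clique with injective labeling λ, and let S be a bi-spanner of D with M⁻ ⊆ S and M⁺ ⊆ S. Then S is also a bi-spanner of the bi-clique (B,A,λ), i.e., every b ∈ B reaches every a ∈ A via a temporal path contained in S. -/
/-
Since `M⁻` is a perfect matching, `b` is the earliest neighbour of `a₀ := π⁻(b)`, so every
edge at `a₀` is at least as late as `{a₀, b}`; dually `a` is the latest neighbour of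
`b₁ := π⁺(a)`, so every edge at `b₁` is at least as early as `{a, b₁}`. Hence the temporal
path `a₀ ⇝ b₁` given by the bi-spanner extends to the temporal path `b, a₀ ⇝ b₁, a` in `S`.
-/

namespace TS

section TemporalPath

variable {V L : Type} [LinearOrder L] {lab : Sym2 V → L} {S : Set (Sym2 V)}

theorem pathEdges_cons_cons_s7 (u v : V) (p : List V) :
    pathEdges (u :: v :: p) = s(u, v) :: pathEdges (v :: p) := rfl

theorem exists_eq_of_mem_head?_pathEdges {u : V} {p : List V} {e : Sym2 V}
    (he : e ∈ (pathEdges (u :: p)).head?) : ∃ x, e = s(u, x) := by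
  cases p with
  | nil => simp [pathEdges] at he
  | cons x p => exact ⟨x, by simpa [pathEdges_cons_cons_s7, eq_comm] using he⟩

theorem pathEdges_concat :
    ∀ {p : List V} {v : V}, p.getLast? = some v → ∀ w : V,
      pathEdges (p ++ [w]) = pathEdges p ++ [s(v, w)]
  | [], _, h, _ => by simp at h
  | [x], v, h, w => by simp_all [pathEdges]
  | x :: y :: p, v, h, w => by
      rw [List.getLast?_cons_cons] at h
      rw [List.cons_append, List.cons_append, pathEdges_cons_cons_s7, ← List.cons_append,
        pathEdges_concat h w, pathEdges_cons_cons_s7, List.cons_append]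

theorem exists_eq_of_mem_getLast?_pathEdges :
    ∀ {p : List V} {v : V} {e : Sym2 V}, p.getLast? = some v →
      e ∈ (pathEdges p).getLast? → ∃ x, e = s(x, v)
  | [], _, _, h, _ => by simp at h
  | [_], _, _, _, he => by simp [pathEdges] at he
  | [x, y], v, e, h, he => ⟨x, by simp_all [pathEdges, eq_comm]⟩
  | x :: y :: z :: p, v, e, h, he => by
      rw [List.getLast?_cons_cons] at h
      rw [pathEdges_cons_cons_s7, pathEdges_cons_cons_s7, List.getLast?_cons_cons,
        ← pathEdges_cons_cons_s7] at he
      exact exists_eq_of_mem_getLast?_pathEdges h he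

theorem Reaches.cons {u w v : V} (h : Reaches lab S w v) (huw : s(u, w) ∈ S)
    (hw : ∀ x, s(w, x) ∈ S → lab s(u, w) ≤ lab s(w, x)) : Reaches lab S u v := by
  obtain ⟨p, hhead, hlast, -, hpS, hchain⟩ := h
  obtain ⟨p, rfl⟩ : ∃ p', p = w :: p' := List.head?_eq_some_iff.mp hhead
  refine ⟨u :: w :: p, rfl, by rwa [List.getLast?_cons_cons], List.cons_ne_nil _ _, ?_, ?_⟩
  · intro e he
    rw [pathEdges_cons_cons_s7, List.mem_cons] at he
    rcases he with rfl | he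
    exacts [huw, hpS e he]
  · rw [List.Chain', pathEdges_cons_cons_s7, List.isChain_cons]
    refine ⟨fun e he => ?_, hchain⟩
    obtain ⟨x, rfl⟩ := exists_eq_of_mem_head?_pathEdges he
    exact hw x (hpS _ (List.mem_of_mem_head? he))

theorem Reaches.concat {u v w : V} (h : Reaches lab S u v) (hvw : s(v, w) ∈ S)
    (hv : ∀ x, s(x, v) ∈ S → lab s(x, v) ≤ lab s(v, w)) : Reaches lab S u w := by
  obtain ⟨p, hhead, hlast, hne, hpS, hchain⟩ := h
  refine ⟨p ++ [w], by rwa [List.head?_append_of_ne_nil _ hne], by simp,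
    by simp, ?_, ?_⟩
  · intro e he
    rw [pathEdges_concat hlast, List.mem_append, List.mem_singleton] at he
    rcases he with he | rfl
    exacts [hpS e he, hvw]
  · rw [List.Chain', pathEdges_concat hlast]
    refine hchain.append (List.isChain_singleton _) fun e he f hf => ?_
    obtain ⟨x, rfl⟩ := exists_eq_of_mem_getLast?_pathEdges hlast he
    obtain rfl : s(v, w) = f := by simpa using hf
    exact hv x (hpS _ (List.mem_of_mem_getLast? he))

end TemporalPath

section BiClique

variable {α β L : Type} [LinearOrder L] {lab : Sym2 (α ⊕ β) → L} {S : Set (Sym2 (α ⊕ β))}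

theorem Reaches.inr_cons_of_isEarliestNbrA (hSE : S ⊆ bicliqueEdges α β) {a : α} {b : β}
    {v : α ⊕ β} (h : Reaches lab S (Sum.inl a) v) (hE : IsEarliestNbrA lab a b)
    (hab : s(Sum.inl a, Sum.inr b) ∈ S) : Reaches lab S (Sum.inr b) v := by
  refine h.cons (by rwa [Sym2.eq_swap]) fun x hx => ?_
  obtain ⟨a', b', hx⟩ := hSE hx
  obtain ⟨rfl, rfl⟩ : a = a' ∧ x = Sum.inr b' := by simpa using hx
  rw [Sym2.eq_swap]
  exact hE b'

theorem Reaches.inl_concat_of_isLatestNbrB (hSE : S ⊆ bicliqueEdges α β) {a : α} {b : β}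
    {u : α ⊕ β} (h : Reaches lab S u (Sum.inr b)) (hL : IsLatestNbrB lab b a)
    (hab : s(Sum.inl a, Sum.inr b) ∈ S) : Reaches lab S u (Sum.inl a) := by
  refine h.concat (by rwa [Sym2.eq_swap]) fun x hx => ?_
  obtain ⟨a', b', hx⟩ := hSE hx
  obtain ⟨rfl, rfl⟩ : x = Sum.inl a' ∧ b = b' := by simpa using hx
  rw [Sym2.eq_swap (a := Sum.inr b)]
  exact hL a'

end BiClique

theorem stmt7_general {α β : Type}
    (lab : Sym2 (α ⊕ β) → ℕ)
    (hEM : ExtremallyMatched lab) (S : Set (Sym2 (α ⊕ β)))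
    (hS : IsBiSpanner lab S)
    (hMm1 : ∀ (a : α) (b : β), IsEarliestNbrA lab a b → s(Sum.inl a, Sum.inr b) ∈ S)
    (hMp2 : ∀ (b : β) (a : α), IsLatestNbrB lab b a → s(Sum.inl a, Sum.inr b) ∈ S) :
    ∀ (b : β) (a : α), Reaches lab S (Sum.inr b) (Sum.inl a) := by
  obtain ⟨⟨fm, gm, hfm, -, -, hfgm⟩, ⟨fp, gp, -, hgp, hgfp, -⟩⟩ := hEM
  intro b a
  have hE : IsEarliestNbrA lab (gm b) b := by simpa only [hfgm] using hfm (gm b)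
  have hL : IsLatestNbrB lab (fp a) a := by simpa only [hgfp] using hgp (fp a)
  have hpath : Reaches lab S (Sum.inl (gm b)) (Sum.inl a) :=
    (hS.2 (gm b) (fp a)).inl_concat_of_isLatestNbrB hS.1 hL (hMp2 _ _ hL)
  exact hpath.inr_cons_of_isEarliestNbrA hS.1 hE (hMm1 _ _ hE)

/-- in an extremally matched bi-clique with injective labeling,
any bi-spanner `S` containing all earliest edges `M⁻` and all latest edges
`M⁺` is also a bi-spanner of the bi-clique with sides switched, i.e. every
`b ∈ B` reaches every `a ∈ A` via a temporal path in `S`. -/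
theorem stmt7 {α β : Type} [Fintype α] [Fintype β]
    (lab : Sym2 (α ⊕ β) → ℕ) (hinj : Set.InjOn lab (bicliqueEdges α β))
    (hEM : ExtremallyMatched lab) (S : Set (Sym2 (α ⊕ β)))
    (hS : IsBiSpanner lab S)
    (hMm1 : ∀ (a : α) (b : β), IsEarliestNbrA lab a b → s(Sum.inl a, Sum.inr b) ∈ S)
    (hMm2 : ∀ (b : β) (a : α), IsEarliestNbrB lab b a → s(Sum.inl a, Sum.inr b) ∈ S)
    (hMp1 : ∀ (a : α) (b : β), IsLatestNbrA lab a b → s(Sum.inl a, Sum.inr b) ∈ S)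
    (hMp2 : ∀ (b : β) (a : α), IsLatestNbrB lab b a → s(Sum.inl a, Sum.inr b) ∈ S) :
    ∀ (b : β) (a : α), Reaches lab S (Sum.inr b) (Sum.inl a) :=
  stmt7_general lab hEM S hS hMm1 hMp2

end TS
end

section
/- Let D = (A,B,λ) be an extremally matched temporal bi-clique with injective labeling λ and n = |A| = |B|, and let c ∈ (0,1]. If there is a c-steep edge e ∈ A⊗B, then |In(e) ∩ Out(e)| ≥ 2cn. -/
/-!
Write `t = λ(ab)`, `k_A = ind_a(ab)` and `k_B = ind_b(ab)`. Every `b'` with `λ(ab') ≤ t` lies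
in `In(a, t)`, and it lies in `Out(b, t)` through the path `b, π⁺(b'), b'` unless
`λ(π⁺(b') b) < t`; as `π⁺` is injective on `B`, at most `k_B` vertices fail, so at least
`k_A - k_B` vertices of `B` lie in `In(e) ∩ Out(e)`. The same count with `π⁻` in place of
`π⁺`, or with the roles of `A` and `B` exchanged, gives `|k_A - k_B|` such vertices in each
of `A` and `B`.
-/

namespace TS

open Finset

section TemporalPaths

variable {V L : Type} [LinearOrder L] (lab : Sym2 V → L) {E : Set (Sym2 V)} {t : L}

lemma mem_inSet_of_edge {u v : V} (huv : s(u, v) ∈ E) (h : lab s(u, v) ≤ t) :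
    u ∈ InSet lab E v t :=
  ⟨[u, v], rfl, rfl, ⟨by simp, by simpa [pathEdges], List.isChain_singleton _⟩,
    by simpa [pathEdges]⟩

lemma mem_outSet_of_edge {v w : V} (hvw : s(v, w) ∈ E) (h : t ≤ lab s(v, w)) :
    w ∈ OutSet lab E v t :=
  ⟨[v, w], rfl, rfl, ⟨by simp, by simpa [pathEdges], List.isChain_singleton _⟩,
    by simpa [pathEdges]⟩

lemma mem_inSet_of_edge_edge {u w v : V} (huw : s(u, w) ∈ E) (hwv : s(w, v) ∈ E)
    (h₁ : lab s(u, w) ≤ lab s(w, v)) (h₂ : lab s(w, v) ≤ t) : u ∈ InSet lab E v t :=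
  ⟨[u, w, v], rfl, rfl, ⟨by simp, by simp [pathEdges, huw, hwv], List.isChain_pair.2 h₁⟩,
    by simp [pathEdges, h₁.trans h₂, h₂]⟩

lemma mem_outSet_of_edge_edge {v w x : V} (hvw : s(v, w) ∈ E) (hwx : s(w, x) ∈ E)
    (h₁ : t ≤ lab s(v, w)) (h₂ : lab s(v, w) ≤ lab s(w, x)) : x ∈ OutSet lab E v t :=
  ⟨[v, w, x], rfl, rfl, ⟨by simp, by simp [pathEdges, hvw, hwx], List.isChain_pair.2 h₂⟩,
    by simp [pathEdges, h₁, h₁.trans h₂]⟩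

end TemporalPaths

lemma card_filter_le_card_filter_add_card_filter_and {X : Type} [Fintype X]
    {P Q R : X → Prop} [DecidablePred P] [DecidablePred Q] [DecidablePred R]
    (hQR : ∀ x, ¬ Q x → R x) :
    #{x | P x} ≤ #{x | R x} + #{x | P x ∧ Q x} := by
  calc #{x | P x} = #{x | P x ∧ ¬ Q x} + #{x | P x ∧ Q x} := by
        rw [← card_filter_add_card_filter_not (p := fun x => ¬ Q x), filter_filter, filter_filter]
        simp only [not_not]
    _ ≤ #{x | R x} + #{x | P x ∧ Q x} :=
        Nat.add_le_add_right (card_le_card (monotone_filter_right _ fun x _ hx => hQR x hx.2)) _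

section Biclique

open Sum

variable {α β : Type}

lemma inl_inr_mem_bicliqueEdges (x : α) (y : β) : s(inl x, inr y) ∈ bicliqueEdges α β :=
  ⟨x, y, rfl⟩

lemma inr_inl_mem_bicliqueEdges (x : α) (y : β) : s(inr y, inl x) ∈ bicliqueEdges α β :=
  ⟨x, y, Sym2.eq_swap⟩

lemma ExtremallyMatched.exists_equiv {L : Type} [LinearOrder L] {lab : Sym2 (α ⊕ β) → L}
    (h : ExtremallyMatched lab) :
    ∃ m p : α ≃ β, (∀ x, IsEarliestNbrA lab x (m x)) ∧ (∀ x, IsEarliestNbrB lab (m x) x) ∧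
      (∀ x, IsLatestNbrA lab x (p x)) ∧ (∀ x, IsLatestNbrB lab (p x) x) := by
  obtain ⟨⟨f, g, hf, hg, hgf, hfg⟩, ⟨f', g', hf', hg', hgf', hfg'⟩⟩ := h
  exact ⟨⟨f, g, hgf, hfg⟩, ⟨f', g', hgf', hfg'⟩, hf, fun x => by simpa [hgf] using hg (f x),
    hf', fun x => by simpa [hgf'] using hg' (f' x)⟩

lemma card_inl_mem_add_card_inr_mem [Fintype α] [Fintype β] (S : Set (α ⊕ β))
    [DecidablePred (· ∈ S)] : #{x | inl x ∈ S} + #{y | inr y ∈ S} = S.ncard := by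
  rw [Set.ncard_eq_toFinset_card', ← card_toLeft_add_card_toRight]
  congr 2 <;> ext <;> simp

variable [Fintype α] [Fintype β] (lab : Sym2 (α ⊕ β) → ℕ) (a : α) (b : β)

section
open scoped Classical

lemma indA_le_indB_add_card_inr {p : α ≃ β} (hp : ∀ x, IsLatestNbrA lab x (p x)) :
    indA lab a b ≤ indB lab a b + #{y | inr y ∈
      InEdge lab (bicliqueEdges α β) (inl a) (inr b) ∩
        OutEdge lab (bicliqueEdges α β) (inl a) (inr b)} := by
  set t := lab s(inl a, inr b)
  calc indA lab a b
      ≤ #{y | lab s(inl (p.symm y), inr b) ≤ t} +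
          #{y | lab s(inl a, inr y) ≤ t ∧ t ≤ lab s(inl (p.symm y), inr b)} :=
        card_filter_le_card_filter_add_card_filter_and fun _ h => (not_le.1 h).le
    _ ≤ _ := by
      refine add_le_add (card_equiv p.symm (by simp [t])).le (card_le_card ?_)
      refine monotone_filter_right _ fun y _ ⟨h₁, h₂⟩ => ⟨Or.inl ?_, Or.inr ?_⟩
      · exact mem_inSet_of_edge lab (inr_inl_mem_bicliqueEdges a y)
          (by rw [Sym2.eq_swap (a := inr y)]; exact h₁)
      · refine mem_outSet_of_edge_edge lab (inr_inl_mem_bicliqueEdges (p.symm y) b)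
          (inl_inr_mem_bicliqueEdges (p.symm y) y)
          (by rw [Sym2.eq_swap (a := inr b)]; exact h₂) ?_
        rw [Sym2.eq_swap (a := inr b)]
        simpa using hp (p.symm y) b

lemma indB_le_indA_add_card_inr {m : α ≃ β} (hm : ∀ x, IsEarliestNbrA lab x (m x)) :
    indB lab a b ≤ indA lab a b + #{y | inr y ∈
      InEdge lab (bicliqueEdges α β) (inl a) (inr b) ∩
        OutEdge lab (bicliqueEdges α β) (inl a) (inr b)} := by
  set t := lab s(inl a, inr b)
  calc indB lab a b
      = #{y | lab s(inl (m.symm y), inr b) ≤ t} := card_equiv m (by simp [t])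
    _ ≤ #{y | lab s(inl a, inr y) ≤ t} +
          #{y | lab s(inl (m.symm y), inr b) ≤ t ∧ t ≤ lab s(inl a, inr y)} :=
        card_filter_le_card_filter_add_card_filter_and fun _ h => (not_le.1 h).le
    _ ≤ _ := by
      refine Nat.add_le_add_left (card_le_card ?_) _
      refine monotone_filter_right _ fun y _ ⟨h₁, h₂⟩ => ⟨Or.inr ?_, Or.inl ?_⟩
      · refine mem_inSet_of_edge_edge lab (inr_inl_mem_bicliqueEdges (m.symm y) y)
          (inl_inr_mem_bicliqueEdges (m.symm y) b) ?_ h₁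
        rw [Sym2.eq_swap (a := inr y)]
        simpa using hm (m.symm y) b
      · exact mem_outSet_of_edge lab (inl_inr_mem_bicliqueEdges a y) h₂

lemma indA_le_indB_add_card_inl {m : α ≃ β} (hm : ∀ x, IsEarliestNbrB lab (m x) x) :
    indA lab a b ≤ indB lab a b + #{x | inl x ∈
      InEdge lab (bicliqueEdges α β) (inl a) (inr b) ∩
        OutEdge lab (bicliqueEdges α β) (inl a) (inr b)} := by
  set t := lab s(inl a, inr b)
  calc indA lab a b
      = #{x | lab s(inl a, inr (m x)) ≤ t} := card_equiv m.symm (by simp [t])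
    _ ≤ #{x | lab s(inl x, inr b) ≤ t} +
          #{x | lab s(inl a, inr (m x)) ≤ t ∧ t ≤ lab s(inl x, inr b)} :=
        card_filter_le_card_filter_add_card_filter_and fun _ h => (not_le.1 h).le
    _ ≤ _ := by
      refine Nat.add_le_add_left (card_le_card ?_) _
      refine monotone_filter_right _ fun x _ ⟨h₁, h₂⟩ => ⟨Or.inl ?_, Or.inr ?_⟩
      · refine mem_inSet_of_edge_edge lab (inl_inr_mem_bicliqueEdges x (m x))
          (inr_inl_mem_bicliqueEdges a (m x)) ?_
          (by rw [Sym2.eq_swap (a := inr (m x))]; exact h₁)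
        rw [Sym2.eq_swap (a := inr (m x))]
        exact hm x a
      · exact mem_outSet_of_edge lab (inr_inl_mem_bicliqueEdges x b)
          (by rw [Sym2.eq_swap (a := inr b)]; exact h₂)

lemma indB_le_indA_add_card_inl {p : α ≃ β} (hp : ∀ x, IsLatestNbrB lab (p x) x) :
    indB lab a b ≤ indA lab a b + #{x | inl x ∈
      InEdge lab (bicliqueEdges α β) (inl a) (inr b) ∩
        OutEdge lab (bicliqueEdges α β) (inl a) (inr b)} := by
  set t := lab s(inl a, inr b)
  calc indB lab a b
      ≤ #{x | lab s(inl a, inr (p x)) ≤ t} +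
          #{x | lab s(inl x, inr b) ≤ t ∧ t ≤ lab s(inl a, inr (p x))} :=
        card_filter_le_card_filter_add_card_filter_and fun _ h => (not_le.1 h).le
    _ ≤ _ := by
      refine add_le_add (card_equiv p (by simp [t])).le (card_le_card ?_)
      refine monotone_filter_right _ fun x _ ⟨h₁, h₂⟩ => ⟨Or.inr ?_, Or.inl ?_⟩
      · exact mem_inSet_of_edge lab (inl_inr_mem_bicliqueEdges x b) h₁
      · refine mem_outSet_of_edge_edge lab (inl_inr_mem_bicliqueEdges a (p x))
          (inr_inl_mem_bicliqueEdges x (p x)) h₂ ?_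
        rw [Sym2.eq_swap (a := inr (p x))]
        exact hp x a

end

theorem two_mul_abs_indA_sub_indB_le (hEM : ExtremallyMatched lab) :
    2 * |(indA lab a b : ℝ) - indB lab a b| ≤
      (InEdge lab (bicliqueEdges α β) (inl a) (inr b) ∩
        OutEdge lab (bicliqueEdges α β) (inl a) (inr b)).ncard := by
  classical
  obtain ⟨m, p, hmA, hmB, hpA, hpB⟩ := hEM.exists_equiv
  have h₁ := indA_le_indB_add_card_inr lab a b hpA
  have h₂ := indB_le_indA_add_card_inr lab a b hmA
  have h₃ := indA_le_indB_add_card_inl lab a b hmB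
  have h₄ := indB_le_indA_add_card_inl lab a b hpB
  rw [← card_inl_mem_add_card_inr_mem]
  rify at h₁ h₂ h₃ h₄
  push_cast
  rcases abs_cases ((indA lab a b : ℝ) - indB lab a b) with ⟨h, -⟩ | ⟨h, -⟩ <;>
    rw [h] <;> linarith

end Biclique

theorem stmt14_general {α β : Type} [Fintype α] [Fintype β] (n : ℕ)
    (lab : Sym2 (α ⊕ β) → ℕ)
    (hEM : ExtremallyMatched lab) (c : ℝ)
    (a : α) (b : β)
    (hsteep : c * n ≤ |(indA lab a b : ℝ) - (indB lab a b : ℝ)|) :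
    2 * c * n ≤
      ((InEdge lab (bicliqueEdges α β) (Sum.inl a) (Sum.inr b) ∩
        OutEdge lab (bicliqueEdges α β) (Sum.inl a) (Sum.inr b)).ncard : ℝ) := by
  have := two_mul_abs_indA_sub_indB_le lab a b hEM
  linarith

/-- in an extremally matched bi-clique with injective labeling
and `n` vertices per side, a `c`-steep edge `e = {a,b}` (for `c ∈ (0,1]`,
`|ind_a(e) − ind_b(e)| ≥ cn`) satisfies `|In(e) ∩ Out(e)| ≥ 2cn`. -/
theorem stmt14 {α β : Type} [Fintype α] [Fintype β] (n : ℕ)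
    (hA : Fintype.card α = n) (hB : Fintype.card β = n)
    (lab : Sym2 (α ⊕ β) → ℕ) (hinj : Set.InjOn lab (bicliqueEdges α β))
    (hEM : ExtremallyMatched lab) (c : ℝ) (hc0 : 0 < c) (hc1 : c ≤ 1)
    (a : α) (b : β)
    (hsteep : c * n ≤ |(indA lab a b : ℝ) - (indB lab a b : ℝ)|) :
    2 * c * n ≤
      ((InEdge lab (bicliqueEdges α β) (Sum.inl a) (Sum.inr b) ∩
        OutEdge lab (bicliqueEdges α β) (Sum.inl a) (Sum.inr b)).ncard : ℝ) :=
  stmt14_general n lab hEM c a b hsteep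

end TS
end
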